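/- arXiv:2004.05965 — 3 statements merged into one kernel-verified Lean document; each statement's English description precedes it below -/
import Mathlib

section
/- Let Q, R, P be symmetric positive definite matrices of sizes n×n, m×m, nT×nT respectively, and let A ∈ ℝ^{n×n}, C ∈ ℝ^{m×n}. Define H as the block matrix stacking F = [0 ⋯ −A I], G = [0 ⋯ 0 C], and Π = [I_{nT} 0], and W = blkdiag(Q, R, P). Then HᵀW⁻¹H is positive definite. -/
/-!
`W` is block diagonal with positive definite blocks, so `W⁻¹` is positive definite, and
`Hᵀ W⁻¹ H` is positive definite as soon as `H` has trivial kernel. If `H x = 0`, the prior rows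
`Π` say that `x` vanishes on the first `T` time steps; on such vectors the dynamics rows `F`
reduce to the identity on the last time step, so `x` vanishes there too.
-/

open Matrix

namespace Matrix

theorem PosDef.fromBlocks_zero {m n R : Type*} [Fintype m] [Fintype n] [CommRing R]
    [PartialOrder R] [StarRing R] [StarOrderedRing R]
    {A : Matrix m m R} {D : Matrix n n R} (hA : A.PosDef) (hD : D.PosDef) :
    (fromBlocks A 0 0 D).PosDef := by
  refine of_dotProduct_mulVec_pos ?_ fun x hx => ?_
  · simp [IsHermitian, fromBlocks_conjTranspose, hA.1.eq, hD.1.eq]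
  have hsplit : star x ⬝ᵥ (fromBlocks A 0 0 D *ᵥ x) =
      star (x ∘ Sum.inl) ⬝ᵥ (A *ᵥ (x ∘ Sum.inl)) + star (x ∘ Sum.inr) ⬝ᵥ (D *ᵥ (x ∘ Sum.inr)) := by
    rw [← sumElim_dotProduct_sumElim]
    congr 1
    · ext (_ | _) <;> rfl
    · conv_lhs => rw [← Sum.elim_comp_inl_inr x]
      simp [fromBlocks_mulVec]
  have hblock : x ∘ Sum.inl ≠ 0 ∨ x ∘ Sum.inr ≠ 0 := by
    by_contra! h
    apply hx
    ext (i | j)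
    exacts [congrFun h.1 i, congrFun h.2 j]
  rw [hsplit]
  rcases hblock with h | h
  · exact add_pos_of_pos_of_nonneg (hA.dotProduct_mulVec_pos h)
      (hD.posSemidef.dotProduct_mulVec_nonneg _)
  · exact add_pos_of_nonneg_of_pos (hA.posSemidef.dotProduct_mulVec_nonneg _)
      (hD.dotProduct_mulVec_pos h)

end Matrix

section RollingWindow

variable {n T : ℕ}

-- The block row `[0 ⋯ 0 -A I]`, columns indexed by (time step `0, …, T`, coordinate).
def rollingDynamics (A : Matrix (Fin n) (Fin n) ℝ) : Matrix (Fin n) (Fin (T + 1) × Fin n) ℝ :=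
  of fun i p =>
    if (p.1 : ℕ) = T then (if i = p.2 then (1 : ℝ) else 0)
    else if (p.1 : ℕ) = T - 1 then -A i p.2 else 0

def rollingPrior : Matrix (Fin T × Fin n) (Fin (T + 1) × Fin n) ℝ :=
  of fun q p => if (q.1 : ℕ) = (p.1 : ℕ) ∧ q.2 = p.2 then (1 : ℝ) else 0

theorem rollingPrior_mulVec (x : Fin (T + 1) × Fin n → ℝ) :
    rollingPrior *ᵥ x = fun q => x (q.1.castSucc, q.2) := by
  ext q
  have hrow : rollingPrior q = Pi.single (q.1.castSucc, q.2) 1 := by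
    ext p
    simp [rollingPrior, Pi.single_apply, Prod.ext_iff, Fin.ext_iff, eq_comm]
  rw [mulVec, hrow, single_one_dotProduct]

theorem rollingDynamics_mulVec_of_forall_castSucc_eq_zero (A : Matrix (Fin n) (Fin n) ℝ)
    {x : Fin (T + 1) × Fin n → ℝ} (hx : ∀ q : Fin T × Fin n, x (q.1.castSucc, q.2) = 0) :
    rollingDynamics A *ᵥ x = fun i => x (Fin.last T, i) := by
  ext i
  refine (Finset.sum_eq_single (Fin.last T, i) (fun p _ hp => ?_) (by simp)).trans
    (by simp [rollingDynamics])
  obtain ⟨k, j⟩ := p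
  induction k using Fin.lastCases with
  | last =>
    have hij : i ≠ j := fun h => hp (h ▸ rfl)
    simp [rollingDynamics, hij]
  | cast k => rw [hx (k, j), mul_zero]

theorem fromRows_rollingDynamics_mulVec_injective (A : Matrix (Fin n) (Fin n) ℝ) {m : ℕ}
    (G : Matrix (Fin m) (Fin (T + 1) × Fin n) ℝ) :
    Function.Injective (fromRows (rollingDynamics A) (fromRows G rollingPrior)).mulVec := by
  refine (injective_iff_map_eq_zero (mulVecLin _)).mpr fun x hx => ?_
  simp only [mulVecLin_apply, fromRows_mulVec, ← Sum.elim_zero_zero, Sum.elim_eq_iff] at hx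
  obtain ⟨hdyn, -, hprior⟩ := hx
  have hfirst : ∀ q : Fin T × Fin n, x (q.1.castSucc, q.2) = 0 := fun q =>
    congrFun ((rollingPrior_mulVec x).symm.trans hprior) q
  have hlast : ∀ i, x (Fin.last T, i) = 0 := fun i =>
    congrFun ((rollingDynamics_mulVec_of_forall_castSucc_eq_zero A hfirst).symm.trans hdyn) i
  ext ⟨k, j⟩
  induction k using Fin.lastCases with
  | last => exact hlast j
  | cast k => exact hfirst (k, j)

end RollingWindow

theorem stmt_2_general {n m T : ℕ}
    (A : Matrix (Fin n) (Fin n) ℝ)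
    (Q : Matrix (Fin n) (Fin n) ℝ) (hQ : Q.PosDef)
    (R : Matrix (Fin m) (Fin m) ℝ) (hR : R.PosDef)
    (P : Matrix (Fin T × Fin n) (Fin T × Fin n) ℝ) (hP : P.PosDef)
    (F : Matrix (Fin n) (Fin (T + 1) × Fin n) ℝ)
    (hF : F = Matrix.of fun i p =>
      if (p.1 : ℕ) = T then (if i = p.2 then (1 : ℝ) else 0)
      else if (p.1 : ℕ) = T - 1 then -A i p.2 else 0)
    (G : Matrix (Fin m) (Fin (T + 1) × Fin n) ℝ)
    (Pi0 : Matrix (Fin T × Fin n) (Fin (T + 1) × Fin n) ℝ)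
    (hPi0 : Pi0 = Matrix.of fun q p =>
      if (q.1 : ℕ) = (p.1 : ℕ) ∧ q.2 = p.2 then (1 : ℝ) else 0)
    (H : Matrix (Fin n ⊕ (Fin m ⊕ Fin T × Fin n)) (Fin (T + 1) × Fin n) ℝ)
    (hH : H = Matrix.of (Sum.elim (fun i => F i) (Sum.elim (fun i => G i) (fun q => Pi0 q))))
    (W : Matrix (Fin n ⊕ (Fin m ⊕ Fin T × Fin n)) (Fin n ⊕ (Fin m ⊕ Fin T × Fin n)) ℝ)
    (hW : W = Matrix.fromBlocks Q 0 0 (Matrix.fromBlocks R 0 0 P)) :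
    (Hᵀ * W⁻¹ * H).PosDef := by
  have hWpos : W.PosDef := hW ▸ hQ.fromBlocks_zero (hR.fromBlocks_zero hP)
  have hHrows : H = fromRows (rollingDynamics A) (fromRows G rollingPrior) := by
    rw [hH, hF, hPi0]
    rfl
  rw [← conjTranspose_eq_transpose_of_trivial]
  exact hWpos.inv.conjTranspose_mul_mul_same (hHrows ▸ fromRows_rollingDynamics_mulVec_injective A G)

theorem stmt_2 {n m T : ℕ} (hT : 1 ≤ T)
    (A : Matrix (Fin n) (Fin n) ℝ) (C : Matrix (Fin m) (Fin n) ℝ)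
    (Q : Matrix (Fin n) (Fin n) ℝ) (hQ : Q.PosDef)
    (R : Matrix (Fin m) (Fin m) ℝ) (hR : R.PosDef)
    (P : Matrix (Fin T × Fin n) (Fin T × Fin n) ℝ) (hP : P.PosDef)
    (F : Matrix (Fin n) (Fin (T + 1) × Fin n) ℝ)
    (hF : F = Matrix.of fun i p =>
      if (p.1 : ℕ) = T then (if i = p.2 then (1 : ℝ) else 0)
      else if (p.1 : ℕ) = T - 1 then -A i p.2 else 0)
    (G : Matrix (Fin m) (Fin (T + 1) × Fin n) ℝ)
    (hG : G = Matrix.of fun i p => if (p.1 : ℕ) = T then C i p.2 else 0)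
    (Pi0 : Matrix (Fin T × Fin n) (Fin (T + 1) × Fin n) ℝ)
    (hPi0 : Pi0 = Matrix.of fun q p =>
      if (q.1 : ℕ) = (p.1 : ℕ) ∧ q.2 = p.2 then (1 : ℝ) else 0)
    (H : Matrix (Fin n ⊕ (Fin m ⊕ Fin T × Fin n)) (Fin (T + 1) × Fin n) ℝ)
    (hH : H = Matrix.of (Sum.elim (fun i => F i) (Sum.elim (fun i => G i) (fun q => Pi0 q))))
    (W : Matrix (Fin n ⊕ (Fin m ⊕ Fin T × Fin n)) (Fin n ⊕ (Fin m ⊕ Fin T × Fin n)) ℝ)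
    (hW : W = Matrix.fromBlocks Q 0 0 (Matrix.fromBlocks R 0 0 P)) :
    (Hᵀ * W⁻¹ * H).PosDef :=
  stmt_2_general A Q hQ R hR P hP F hF G Pi0 hPi0 H hH W hW
end

section
/- Let Pᵢ, i = 1, …, N, be symmetric positive definite matrices, each partitioned conformably into 2×2 blocks, and suppose Σᵢ Pᵢ⁻¹ = P⁻¹ for a symmetric positive definite P similarly partitioned. Let marg(X) denote the lower-right block of X, and let P̄ᵢ = marg(Pᵢ) and P̄ = marg(P). Then the distributed marginalization satisfies (Σᵢ P̄ᵢ⁻¹)⁻¹ ⪰ P̄. -/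
open Matrix Finset

namespace Stmt5Aux

variable {m n : Type*} [Fintype m] [Fintype n] [DecidableEq m] [DecidableEq n]

lemma posSemidef_of_isEmpty [IsEmpty n] (A : Matrix n n ℝ) : A.PosSemidef := by
  refine PosSemidef.of_dotProduct_mulVec_nonneg ?_ fun x => ?_
  · ext i j; exact isEmptyElim i
  · simp [dotProduct]

lemma sum_quad {ι : Type*} (s : Finset ι) (A : ι → Matrix n n ℝ) (z : n → ℝ) :
    z ⬝ᵥ (∑ i ∈ s, A i) *ᵥ z = ∑ i ∈ s, z ⬝ᵥ (A i) *ᵥ z := by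
  induction s using Finset.cons_induction with
  | empty => simp [dotProduct]
  | cons a s h ih => rw [Finset.sum_cons, Finset.sum_cons, add_mulVec, dotProduct_add, ih]

lemma isHermitian_sum {ι : Type*} (s : Finset ι) (A : ι → Matrix n n ℝ)
    (h : ∀ i ∈ s, (A i).IsHermitian) : (∑ i ∈ s, A i).IsHermitian := by
  show (∑ i ∈ s, A i)ᴴ = _
  rw [conjTranspose_sum]
  exact Finset.sum_congr rfl h

lemma posDef_toBlocks₁₁ {Ω : Matrix (m ⊕ n) (m ⊕ n) ℝ} (h : Ω.PosDef) :
    Ω.toBlocks₁₁.PosDef := by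
  refine PosDef.of_dotProduct_mulVec_pos ?_ fun ⦃x⦄ hx => ?_
  · ext i j
    have := congrFun (congrFun h.1 (Sum.inl i)) (Sum.inl j)
    simpa [toBlocks₁₁, conjTranspose_apply] using this
  · have hv : (Sum.elim x (0 : n → ℝ)) ≠ 0 := by
      intro hv; apply hx; funext i; exact congrFun hv (Sum.inl i)
    have := h.dotProduct_mulVec_pos hv
    rw [← fromBlocks_toBlocks Ω, fromBlocks_mulVec] at this
    simpa [Function.star_sumElim, sumElim_dotProduct_sumElim, star_trivial] using this

lemma posDef_toBlocks₂₂ {Ω : Matrix (m ⊕ n) (m ⊕ n) ℝ} (h : Ω.PosDef) :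
    Ω.toBlocks₂₂.PosDef := by
  refine PosDef.of_dotProduct_mulVec_pos ?_ fun ⦃x⦄ hx => ?_
  · ext i j
    have := congrFun (congrFun h.1 (Sum.inr i)) (Sum.inr j)
    simpa [toBlocks₂₂, conjTranspose_apply] using this
  · have hv : (Sum.elim (0 : m → ℝ) x) ≠ 0 := by
      intro hv; apply hx; funext i; exact congrFun hv (Sum.inr i)
    have := h.dotProduct_mulVec_pos hv
    rw [← fromBlocks_toBlocks Ω, fromBlocks_mulVec] at this
    simpa [Function.star_sumElim, sumElim_dotProduct_sumElim, star_trivial] using this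

lemma toBlocks₂₁_eq {Ω : Matrix (m ⊕ n) (m ⊕ n) ℝ} (h : Ω.IsHermitian) :
    Ω.toBlocks₂₁ = Ω.toBlocks₁₂ᴴ := by
  ext i j
  have := congrFun (congrFun h (Sum.inr i)) (Sum.inl j)
  simpa [toBlocks₂₁, toBlocks₁₂, conjTranspose_apply] using this.symm

/-- The Schur complement (w.r.t. the 11 block). -/
noncomputable def schur (Ω : Matrix (m ⊕ n) (m ⊕ n) ℝ) : Matrix n n ℝ :=
  Ω.toBlocks₂₂ - Ω.toBlocks₁₂ᴴ * Ω.toBlocks₁₁⁻¹ * Ω.toBlocks₁₂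

lemma blocks_eq {Ω : Matrix (m ⊕ n) (m ⊕ n) ℝ} (h : Ω.IsHermitian) :
    Ω = fromBlocks Ω.toBlocks₁₁ Ω.toBlocks₁₂ Ω.toBlocks₁₂ᴴ Ω.toBlocks₂₂ := by
  conv_lhs => rw [← fromBlocks_toBlocks Ω]
  rw [toBlocks₂₁_eq h]

lemma schur_quad_le {Ω : Matrix (m ⊕ n) (m ⊕ n) ℝ} (h : Ω.PosDef)
    (y : m → ℝ) (x : n → ℝ) :
    x ⬝ᵥ (schur Ω) *ᵥ x ≤ (Sum.elim y x) ⬝ᵥ Ω *ᵥ (Sum.elim y x) := by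
  have hA : Ω.toBlocks₁₁.PosDef := posDef_toBlocks₁₁ h
  haveI : Invertible Ω.toBlocks₁₁ := hA.isUnit.invertible
  have key := schur_complement_eq₁₁ (α := ℝ) Ω.toBlocks₁₂ Ω.toBlocks₂₂ y x hA.1
  rw [← blocks_eq h.1] at key
  simp only [star_trivial] at key
  rw [dotProduct_mulVec (v := Sum.elim y x), key, dotProduct_mulVec (v := x)]
  have hpsd := hA.posSemidef.dotProduct_mulVec_nonneg (y + (Ω.toBlocks₁₁⁻¹ * Ω.toBlocks₁₂) *ᵥ x)
  simp only [star_trivial] at hpsd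
  rw [dotProduct_mulVec] at hpsd
  unfold schur
  linarith

lemma schur_quad_eq {Ω : Matrix (m ⊕ n) (m ⊕ n) ℝ} (h : Ω.PosDef) (x : n → ℝ) :
    (Sum.elim (-((Ω.toBlocks₁₁⁻¹ * Ω.toBlocks₁₂) *ᵥ x)) x) ⬝ᵥ
        Ω *ᵥ (Sum.elim (-((Ω.toBlocks₁₁⁻¹ * Ω.toBlocks₁₂) *ᵥ x)) x)
      = x ⬝ᵥ (schur Ω) *ᵥ x := by
  have hA : Ω.toBlocks₁₁.PosDef := posDef_toBlocks₁₁ h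
  haveI : Invertible Ω.toBlocks₁₁ := hA.isUnit.invertible
  have key := schur_complement_eq₁₁ (α := ℝ) Ω.toBlocks₁₂ Ω.toBlocks₂₂
    (-((Ω.toBlocks₁₁⁻¹ * Ω.toBlocks₁₂) *ᵥ x)) x hA.1
  rw [← blocks_eq h.1] at key
  simp only [star_trivial] at key
  rw [dotProduct_mulVec, key, neg_add_cancel]
  simp [schur, dotProduct_mulVec]

lemma schur_posDef {Ω : Matrix (m ⊕ n) (m ⊕ n) ℝ} (h : Ω.PosDef) : (schur Ω).PosDef := by
  refine PosDef.of_dotProduct_mulVec_pos ?_ fun ⦃x⦄ hx => ?_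
  · have hA : Ω.toBlocks₁₁.PosDef := posDef_toBlocks₁₁ h
    have h22 : Ω.toBlocks₂₂.IsHermitian := (posDef_toBlocks₂₂ h).1
    exact h22.sub (isHermitian_conjTranspose_mul_mul _ hA.1.inv)
  · have hv : (Sum.elim (-((Ω.toBlocks₁₁⁻¹ * Ω.toBlocks₁₂) *ᵥ x)) x) ≠ 0 := by
      intro hv; apply hx; funext i; exact congrFun hv (Sum.inr i)
    have := h.dotProduct_mulVec_pos hv
    simp only [star_trivial] at this
    rw [schur_quad_eq h x] at this
    simpa [star_trivial] using this

/-- For a positive definite matrix, the inverse of the lower-right block equals the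
Schur complement of the inverse. -/
lemma inv_toBlocks₂₂ {X : Matrix (m ⊕ n) (m ⊕ n) ℝ} (hX : X.PosDef) :
    (X.toBlocks₂₂)⁻¹ = schur X⁻¹ := by
  have hΩ : X⁻¹.PosDef := hX.inv
  haveI hXi : Invertible X := hX.isUnit.invertible
  set Ω := X⁻¹ with hΩdef
  have hA : Ω.toBlocks₁₁.PosDef := posDef_toBlocks₁₁ hΩ
  haveI iA : Invertible Ω.toBlocks₁₁ := hA.isUnit.invertible
  have hS : (schur Ω).PosDef := schur_posDef hΩ
  haveI iS : Invertible (schur Ω) := hS.isUnit.invertible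
  haveI iΩ : Invertible Ω := hΩ.isUnit.invertible
  obtain ⟨A, B, D, hA', hB', hD'⟩ :
      ∃ A B D, Ω.toBlocks₁₁ = A ∧ Ω.toBlocks₁₂ = B ∧ Ω.toBlocks₂₂ = D := ⟨_, _, _, rfl, rfl, rfl⟩
  have hblocks : Ω = fromBlocks A B Bᴴ D := by rw [blocks_eq hΩ.1, hA', hB', hD']
  have hschur : schur Ω = D - Bᴴ * A⁻¹ * B := by rw [schur, hA', hB', hD']
  haveI iA2 : Invertible A := hA' ▸ iA
  haveI iS2 : Invertible (D - Bᴴ * ⅟A * B) := by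
    rw [invOf_eq_nonsing_inv, ← hschur]; exact iS
  haveI iFB : Invertible (fromBlocks A B Bᴴ D) := hblocks ▸ iΩ
  have hfb := invOf_fromBlocks₁₁_eq A B Bᴴ D
  simp only [invOf_eq_nonsing_inv] at hfb
  have hX2 : X.toBlocks₂₂ = (D - Bᴴ * A⁻¹ * B)⁻¹ := by
    have hXeq : X = (fromBlocks A B Bᴴ D)⁻¹ := by
      rw [← hblocks, hΩdef]
      exact (inv_inv_of_invertible X).symm
    rw [hXeq, hfb, toBlocks_fromBlocks₂₂]
  rw [hX2, ← hschur, inv_inv_of_invertible]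

/-- Loewner-antitonicity of the inverse. -/
lemma inv_sub_posSemidef {A B : Matrix n n ℝ} (hA : A.PosDef) (hB : B.PosDef)
    (h : (B⁻¹ - A).PosSemidef) : (A⁻¹ - B).PosSemidef := by
  haveI : Invertible A := hA.isUnit.invertible
  haveI : Invertible B := hB.isUnit.invertible
  refine PosSemidef.of_dotProduct_mulVec_nonneg (hA.1.inv.sub hB.1) fun z => ?_
  simp only [star_trivial]
  rw [sub_mulVec, dotProduct_sub]
  set u : n → ℝ := A⁻¹ *ᵥ z with hu
  set w : n → ℝ := B *ᵥ z with hw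
  have h1 : (0:ℝ) ≤ (u - w) ⬝ᵥ A *ᵥ (u - w) := by
    have := hA.posSemidef.dotProduct_mulVec_nonneg (u - w); simpa only [star_trivial] using this
  have hAu : A *ᵥ u = z := by rw [hu, mulVec_mulVec, mul_inv_of_invertible, one_mulVec]
  have hBw : B⁻¹ *ᵥ w = z := by rw [hw, mulVec_mulVec, inv_mul_of_invertible, one_mulVec]
  have h2 : (0:ℝ) ≤ w ⬝ᵥ B⁻¹ *ᵥ w - w ⬝ᵥ A *ᵥ w := by
    have := h.dotProduct_mulVec_nonneg w
    simp only [star_trivial] at this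
    rwa [sub_mulVec, dotProduct_sub] at this
  have hsymm : ∀ (M : Matrix n n ℝ), M.IsHermitian → ∀ a b : n → ℝ,
      a ⬝ᵥ M *ᵥ b = b ⬝ᵥ M *ᵥ a := by
    intro M hM a b
    conv_lhs => rw [dotProduct_mulVec, ← hM.eq, conjTranspose_eq_transpose_of_trivial,
      vecMul_transpose]
    rw [dotProduct_comm]
  have e1 : (u - w) ⬝ᵥ A *ᵥ (u - w)
      = u ⬝ᵥ A *ᵥ u - u ⬝ᵥ A *ᵥ w - w ⬝ᵥ A *ᵥ u + w ⬝ᵥ A *ᵥ w := by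
    rw [sub_dotProduct, mulVec_sub, dotProduct_sub, dotProduct_sub]; ring
  have e2 : u ⬝ᵥ A *ᵥ u = z ⬝ᵥ A⁻¹ *ᵥ z := by
    rw [hsymm A hA.1 u, hAu, hu, dotProduct_comm]
  have e3 : w ⬝ᵥ A *ᵥ u = w ⬝ᵥ z := by rw [hAu]
  have e4 : u ⬝ᵥ A *ᵥ w = w ⬝ᵥ z := by rw [hsymm A hA.1, hAu]
  have e5 : w ⬝ᵥ B⁻¹ *ᵥ w = w ⬝ᵥ z := by rw [hBw]
  have e6 : w ⬝ᵥ z = z ⬝ᵥ B *ᵥ z := by rw [hw, dotProduct_comm]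
  rw [e1, e2, e3, e4] at h1
  rw [e5] at h2
  rw [e6] at h1 h2
  linarith

end Stmt5Aux

open Stmt5Aux in
theorem stmt_5 {k l N : ℕ} (P : Fin N → Matrix (Fin k ⊕ Fin l) (Fin k ⊕ Fin l) ℝ)
    (hP : ∀ i, (P i).PosDef)
    (Pc : Matrix (Fin k ⊕ Fin l) (Fin k ⊕ Fin l) ℝ) (hPc : Pc.PosDef)
    (hsum : ∑ i, (P i)⁻¹ = Pc⁻¹) :
    ((∑ i, ((P i).toBlocks₂₂)⁻¹)⁻¹ - Pc.toBlocks₂₂).PosSemidef := by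
  by_cases hl : IsEmpty (Fin l)
  · exact posSemidef_of_isEmpty _
  rw [not_isEmpty_iff] at hl
  have hN : N ≠ 0 := by
    intro h0
    subst h0
    rw [Finset.univ_eq_empty, Finset.sum_empty] at hsum
    have hinv : (Pc⁻¹).PosDef := hPc.inv
    rw [← hsum] at hinv
    obtain ⟨j⟩ := hl
    have h1 : (fun _ : Fin k ⊕ Fin l => (1:ℝ)) ≠ 0 := by
      intro hc; exact one_ne_zero (congrFun hc (Sum.inr j))
    have := hinv.dotProduct_mulVec_pos h1
    simp at this
  haveI : NeZero N := ⟨hN⟩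
  have hMterm : ∀ i, (((P i).toBlocks₂₂)⁻¹).PosDef := fun i =>
    (posDef_toBlocks₂₂ (hP i)).inv
  have hMpd : (∑ i, ((P i).toBlocks₂₂)⁻¹).PosDef := by
    refine PosDef.of_dotProduct_mulVec_pos (isHermitian_sum _ _ fun i _ => (hMterm i).1) fun ⦃x⦄ hx => ?_
    simp only [star_trivial]
    rw [sum_quad]
    refine Finset.sum_pos (fun i _ => ?_) Finset.univ_nonempty
    have := (hMterm i).dotProduct_mulVec_pos hx
    simpa only [star_trivial] using this
  have key : ∀ z : Fin l → ℝ,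
      z ⬝ᵥ (∑ i, ((P i).toBlocks₂₂)⁻¹) *ᵥ z ≤ z ⬝ᵥ (Pc.toBlocks₂₂)⁻¹ *ᵥ z := by
    intro z
    have hΩc : (Pc⁻¹).PosDef := hPc.inv
    set y : Fin k → ℝ := -(((Pc⁻¹).toBlocks₁₁⁻¹ * (Pc⁻¹).toBlocks₁₂) *ᵥ z) with hy
    calc z ⬝ᵥ (∑ i, ((P i).toBlocks₂₂)⁻¹) *ᵥ z
        = ∑ i, z ⬝ᵥ ((P i).toBlocks₂₂)⁻¹ *ᵥ z := sum_quad _ _ _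
      _ = ∑ i, z ⬝ᵥ (schur ((P i)⁻¹)) *ᵥ z := by
          exact Finset.sum_congr rfl fun i _ => by rw [inv_toBlocks₂₂ (hP i)]
      _ ≤ ∑ i, (Sum.elim y z) ⬝ᵥ (P i)⁻¹ *ᵥ (Sum.elim y z) :=
          Finset.sum_le_sum fun i _ => schur_quad_le ((hP i).inv) y z
      _ = (Sum.elim y z) ⬝ᵥ (Pc⁻¹) *ᵥ (Sum.elim y z) := by rw [← hsum, sum_quad]
      _ = z ⬝ᵥ (schur (Pc⁻¹)) *ᵥ z := by rw [hy]; exact schur_quad_eq hΩc z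
      _ = z ⬝ᵥ (Pc.toBlocks₂₂)⁻¹ *ᵥ z := by rw [inv_toBlocks₂₂ hPc]
  have hPc22 : Pc.toBlocks₂₂.PosDef := posDef_toBlocks₂₂ hPc
  have hPSD1 : ((Pc.toBlocks₂₂)⁻¹ - ∑ i, ((P i).toBlocks₂₂)⁻¹).PosSemidef := by
    refine PosSemidef.of_dotProduct_mulVec_nonneg (hPc22.1.inv.sub hMpd.1) fun z => ?_
    simp only [star_trivial]
    rw [sub_mulVec, dotProduct_sub]
    have := key z
    linarith
  exact inv_sub_posSemidef hMpd hPc22 hPSD1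
end

section
/- Let Jᵢ : ℝ^d → ℝ be differentiable convex functions, G = (V, E) a connected graph, and L_ρ(x, r, λ, μ) = Σᵢ [Jᵢ(xᵢ) + Σ_{j∈N(i)} (λᵢⱼᵀ(xᵢ − rᵢⱼ) + μᵢⱼᵀ(xⱼ − rᵢⱼ)) + (ρ/2) Σ_{j∈N(i)} (‖xᵢ − rᵢⱼ‖² + ‖xⱼ − rᵢⱼ‖²)] with ρ > 0. If x* minimizes Σᵢ Jᵢ, then setting xᵢ = x*, rᵢⱼ = x*, and choosing λᵢⱼ, μᵢⱼ such that Σ_{j∈N(i)}(λᵢⱼ + μⱼᵢ) = −∇Jᵢ(x*) and λᵢⱼ + μᵢⱼ = 0 for all edges, the point (x, r, λ, μ) is a saddle point of L_ρ: L_ρ(x*, r*, λ, μ) ≤ L_ρ(x*, r*, λ*, μ*) ≤ L_ρ(x, r, λ*, μ*) for all (x, r). -/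
open Finset

noncomputable def augLagrangian {d N : ℕ} (J : Fin N → EuclideanSpace ℝ (Fin d) → ℝ)
    (G : SimpleGraph (Fin N)) [DecidableRel G.Adj] (ρ : ℝ)
    (x : Fin N → EuclideanSpace ℝ (Fin d))
    (r lam mu : Fin N → Fin N → EuclideanSpace ℝ (Fin d)) : ℝ :=
  ∑ i, (J i (x i)
    + ∑ j ∈ G.neighborFinset i,
        (inner ℝ (lam i j) (x i - r i j) + inner ℝ (mu i j) (x j - r i j) : ℝ)
    + (ρ / 2) * ∑ j ∈ G.neighborFinset i,
        (‖x i - r i j‖ ^ 2 + ‖x j - r i j‖ ^ 2))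

/-!
At the consensus point `xᵢ = rᵢⱼ = x*` every constraint residual vanishes, so `L_ρ` equals
`∑ᵢ Jᵢ(x*)` whatever the multipliers are; this gives the first inequality with equality. For the
second, the relation `λᵢⱼ + μᵢⱼ = 0` cancels every `rᵢⱼ` from the linear terms, and exchanging
the roles of `i` and `j` in the `μ`-terms collapses them to `∑ᵢ ⟪cᵢ, xᵢ⟫` with
`cᵢ = ∑_{j ∈ N(i)} (λᵢⱼ + μⱼᵢ) = -∇Jᵢ(x*)`. The penalty is nonnegative, and the tangent-plane
inequality of the convex `Jᵢ` at `x*` bounds `Jᵢ(xᵢ) + ⟪cᵢ, xᵢ⟫` below by `Jᵢ(x*) + ⟪cᵢ, x*⟫`.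
The latter sum is `∑ᵢ Jᵢ(x*)`, since the same collapse at the consensus point gives
`∑ᵢ ⟪cᵢ, x*⟫ = 0`.
-/

open scoped InnerProductSpace

section TangentPlane

variable {E : Type*} [NormedAddCommGroup E] {s : Set E} {f : E → ℝ} {x y : E}

theorem ConvexOn.add_fderiv_sub_le [NormedSpace ℝ E] {f' : E →L[ℝ] ℝ} (hf : ConvexOn ℝ s f)
    (hx : x ∈ s) (hy : y ∈ s) (hf' : HasFDerivAt f f' x) : f x + f' (y - x) ≤ f y := by
  let ℓ : ℝ →ᵃ[ℝ] E := AffineMap.lineMap x y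
  have hline : ConvexOn ℝ (Set.Icc 0 1) (f ∘ ℓ) :=
    (hf.comp_affineMap ℓ).subset (fun _ ht => hf.1.lineMap_mem hx hy ht) (convex_Icc 0 1)
  have hderiv : HasDerivAt (f ∘ ℓ) (f' (y - x)) 0 :=
    (AffineMap.lineMap_apply_zero (k := ℝ) x y ▸ hf').comp_hasDerivAt 0
      AffineMap.hasDerivAt_lineMap
  have := hline.le_slope_of_hasDerivAt (by simp) (by simp) zero_lt_one hderiv
  simp only [slope_def_field, Function.comp_apply, AffineMap.lineMap_apply_one,
    AffineMap.lineMap_apply_zero, sub_zero, div_one, ℓ] at this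
  linarith

theorem ConvexOn.add_inner_gradient_sub_le [InnerProductSpace ℝ E] [CompleteSpace E]
    {f' : E} (hf : ConvexOn ℝ s f) (hx : x ∈ s) (hy : y ∈ s) (hf' : HasGradientAt f f' x) :
    f x + ⟪f', y - x⟫_ℝ ≤ f y :=
  hf.add_fderiv_sub_le hx hy hf'.hasFDerivAt

end TangentPlane

theorem SimpleGraph.sum_sum_neighborFinset_comm {V M : Type*} [Fintype V] [AddCommMonoid M]
    (G : SimpleGraph V) [DecidableRel G.Adj] (f : V → V → M) :
    ∑ i, ∑ j ∈ G.neighborFinset i, f i j = ∑ i, ∑ j ∈ G.neighborFinset i, f j i :=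
  sum_comm' (by simp [G.adj_comm])

theorem sum_neighbor_multiplier_terms_eq {V E : Type*} [Fintype V] [NormedAddCommGroup E]
    [InnerProductSpace ℝ E] (G : SimpleGraph V) [DecidableRel G.Adj] {lam mu : V → V → E}
    (hmu : ∀ i j, G.Adj i j → lam i j + mu i j = 0) (x : V → E) (r : V → V → E) :
    ∑ i, ∑ j ∈ G.neighborFinset i, (⟪lam i j, x i - r i j⟫_ℝ + ⟪mu i j, x j - r i j⟫_ℝ) =
      ∑ i, ⟪∑ j ∈ G.neighborFinset i, (lam i j + mu j i), x i⟫_ℝ := by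
  have hcancel : ∀ i, ∀ j ∈ G.neighborFinset i,
      ⟪lam i j, x i - r i j⟫_ℝ + ⟪mu i j, x j - r i j⟫_ℝ = ⟪lam i j, x i⟫_ℝ + ⟪mu i j, x j⟫_ℝ := by
    intro i j hj
    have hsum : ⟪lam i j + mu i j, r i j⟫_ℝ = 0 := by
      rw [hmu i j ((G.mem_neighborFinset i j).1 hj), inner_zero_left]
    rw [inner_add_left] at hsum
    simp only [inner_sub_right]
    linarith
  calc ∑ i, ∑ j ∈ G.neighborFinset i, (⟪lam i j, x i - r i j⟫_ℝ + ⟪mu i j, x j - r i j⟫_ℝ)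
      = ∑ i, ∑ j ∈ G.neighborFinset i, ⟪lam i j, x i⟫_ℝ
          + ∑ i, ∑ j ∈ G.neighborFinset i, ⟪mu i j, x j⟫_ℝ := by
        rw [← sum_add_distrib]
        exact sum_congr rfl fun i _ => by
          rw [sum_congr rfl (hcancel i), sum_add_distrib]
    _ = ∑ i, ∑ j ∈ G.neighborFinset i, ⟪lam i j, x i⟫_ℝ
          + ∑ i, ∑ j ∈ G.neighborFinset i, ⟪mu j i, x i⟫_ℝ := by
        rw [G.sum_sum_neighborFinset_comm fun i j => ⟪mu i j, x j⟫_ℝ]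
    _ = ∑ i, ⟪∑ j ∈ G.neighborFinset i, (lam i j + mu j i), x i⟫_ℝ := by
        simp only [sum_inner, inner_add_left, sum_add_distrib]

theorem augLagrangian_consensus {d N : ℕ} (J : Fin N → EuclideanSpace ℝ (Fin d) → ℝ)
    (G : SimpleGraph (Fin N)) [DecidableRel G.Adj] (ρ : ℝ) (z : EuclideanSpace ℝ (Fin d))
    (lam mu : Fin N → Fin N → EuclideanSpace ℝ (Fin d)) :
    augLagrangian J G ρ (fun _ => z) (fun _ _ => z) lam mu = ∑ i, J i z := by
  simp [augLagrangian]

theorem sum_add_inner_le_augLagrangian {d N : ℕ} (J : Fin N → EuclideanSpace ℝ (Fin d) → ℝ)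
    (G : SimpleGraph (Fin N)) [DecidableRel G.Adj] {ρ : ℝ} (hρ : 0 ≤ ρ)
    {lam mu : Fin N → Fin N → EuclideanSpace ℝ (Fin d)}
    (hmu : ∀ i j, G.Adj i j → lam i j + mu i j = 0)
    (x : Fin N → EuclideanSpace ℝ (Fin d)) (r : Fin N → Fin N → EuclideanSpace ℝ (Fin d)) :
    ∑ i, (J i (x i) + ⟪∑ j ∈ G.neighborFinset i, (lam i j + mu j i), x i⟫_ℝ) ≤
      augLagrangian J G ρ x r lam mu := by
  have hpenalty : ∀ i, 0 ≤ ρ / 2 * ∑ j ∈ G.neighborFinset i,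
      (‖x i - r i j‖ ^ 2 + ‖x j - r i j‖ ^ 2) := fun i => by positivity
  rw [augLagrangian, sum_add_distrib, sum_add_distrib, sum_add_distrib,
    sum_neighbor_multiplier_terms_eq G hmu x r]
  linarith [sum_nonneg fun i (_ : i ∈ univ) => hpenalty i]

theorem stmt_10_general {d N : ℕ} (J : Fin N → EuclideanSpace ℝ (Fin d) → ℝ)
    (hconv : ∀ i, ConvexOn ℝ Set.univ (J i))
    (hdiff : ∀ i, Differentiable ℝ (J i))
    (G : SimpleGraph (Fin N)) [DecidableRel G.Adj]
    (ρ : ℝ) (hρ : 0 < ρ)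
    (xs : EuclideanSpace ℝ (Fin d))
    (lam mu : Fin N → Fin N → EuclideanSpace ℝ (Fin d))
    (hlam : ∀ i, ∑ j ∈ G.neighborFinset i, (lam i j + mu j i) = -(gradient (J i) xs))
    (hmu : ∀ i j, G.Adj i j → lam i j + mu i j = 0) :
    (∀ lam' mu' : Fin N → Fin N → EuclideanSpace ℝ (Fin d),
        augLagrangian J G ρ (fun _ => xs) (fun _ _ => xs) lam' mu' ≤
          augLagrangian J G ρ (fun _ => xs) (fun _ _ => xs) lam mu) ∧
      (∀ x r,
        augLagrangian J G ρ (fun _ => xs) (fun _ _ => xs) lam mu ≤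
          augLagrangian J G ρ x r lam mu) := by
  refine ⟨fun lam' mu' => by rw [augLagrangian_consensus, augLagrangian_consensus],
    fun x r => ?_⟩
  set c := fun i => ∑ j ∈ G.neighborFinset i, (lam i j + mu j i)
  have hc : ∀ i, c i = -gradient (J i) xs := hlam
  have hc_xs : ∑ i, ⟪c i, xs⟫_ℝ = 0 := by
    simpa using (sum_neighbor_multiplier_terms_eq G hmu (fun _ => xs) (fun _ _ => xs)).symm
  have htangent : ∀ i, J i xs + ⟪c i, xs⟫_ℝ ≤ J i (x i) + ⟪c i, x i⟫_ℝ := fun i => by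
    have := (hconv i).add_inner_gradient_sub_le trivial trivial (hdiff i xs).hasGradientAt
      (y := x i)
    rw [hc, inner_neg_left, inner_neg_left]
    rw [inner_sub_right] at this
    linarith
  calc augLagrangian J G ρ (fun _ => xs) (fun _ _ => xs) lam mu
      = ∑ i, (J i xs + ⟪c i, xs⟫_ℝ) := by
        rw [augLagrangian_consensus, sum_add_distrib, hc_xs, add_zero]
    _ ≤ ∑ i, (J i (x i) + ⟪c i, x i⟫_ℝ) := sum_le_sum fun i _ => htangent i
    _ ≤ augLagrangian J G ρ x r lam mu := sum_add_inner_le_augLagrangian J G hρ.le hmu x r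

theorem stmt_10 {d N : ℕ} (J : Fin N → EuclideanSpace ℝ (Fin d) → ℝ)
    (hconv : ∀ i, ConvexOn ℝ Set.univ (J i))
    (hdiff : ∀ i, Differentiable ℝ (J i))
    (G : SimpleGraph (Fin N)) [DecidableRel G.Adj] (hG : G.Connected)
    (ρ : ℝ) (hρ : 0 < ρ)
    (xs : EuclideanSpace ℝ (Fin d))
    (hmin : ∀ x, ∑ i, J i xs ≤ ∑ i, J i x)
    (lam mu : Fin N → Fin N → EuclideanSpace ℝ (Fin d))
    (hlam : ∀ i, ∑ j ∈ G.neighborFinset i, (lam i j + mu j i) = -(gradient (J i) xs))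
    (hmu : ∀ i j, G.Adj i j → lam i j + mu i j = 0) :
    (∀ lam' mu' : Fin N → Fin N → EuclideanSpace ℝ (Fin d),
        augLagrangian J G ρ (fun _ => xs) (fun _ _ => xs) lam' mu' ≤
          augLagrangian J G ρ (fun _ => xs) (fun _ _ => xs) lam mu) ∧
      (∀ x r,
        augLagrangian J G ρ (fun _ => xs) (fun _ _ => xs) lam mu ≤
          augLagrangian J G ρ x r lam mu) :=
  stmt_10_general J hconv hdiff G ρ hρ xs lam mu hlam hmu
end
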